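/- arXiv:2604.03566 — 2 statements merged into one kernel-verified Lean document; each statement's English description precedes it below -/
import Mathlib

section
/- Let Σ₁, …, Σ_n be symmetric positive definite d×d real matrices and λ₁, …, λ_n real weights with Σ_{k=1}^n λ_k = 1. For every symmetric positive semidefinite matrix S, F(S) ≥ Tr(S) − 2·(A_max − B_min)·Tr(S^{1/2}) + Σ_{k=1}^n λ_k Tr(Σ_k), where A_max = Σ_{i∈I} λ_i⁺ √λ_max(Σ_i) and B_min = Σ_{j∈J} λ_j⁻ √λ_min(Σ_j). -/
open Matrix BigOperators Finset
open scoped Classical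

/-- Unique positive semidefinite square root of a positive semidefinite matrix
(and junk value `0` on other matrices). -/
noncomputable def msqrt {d : ℕ} (M : Matrix (Fin d) (Fin d) ℝ) :
    Matrix (Fin d) (Fin d) ℝ :=
  if h : M.PosSemidef then
    h.1.eigenvectorUnitary.1 * diagonal ((↑) ∘ (√·) ∘ h.1.eigenvalues) *
      (star h.1.eigenvectorUnitary : Matrix (Fin d) (Fin d) ℝ)
  else 0

/-- Smallest eigenvalue of a symmetric matrix (junk value `0` otherwise). -/
noncomputable def lmin {d : ℕ} (M : Matrix (Fin d) (Fin d) ℝ) : ℝ :=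
  if h : M.IsHermitian then ⨅ i, h.eigenvalues i else 0

/-- Largest eigenvalue of a symmetric matrix (junk value `0` otherwise). -/
noncomputable def lmax {d : ℕ} (M : Matrix (Fin d) (Fin d) ℝ) : ℝ :=
  if h : M.IsHermitian then ⨆ i, h.eigenvalues i else 0

/-- Squared Bures–Wasserstein distance. -/
noncomputable def W2sq {d : ℕ} (A B : Matrix (Fin d) (Fin d) ℝ) : ℝ :=
  A.trace + B.trace - 2 * (msqrt (msqrt A * B * msqrt A)).trace

/-- The conditional barycenter objective `F`. -/
noncomputable def Fobj {d n : ℕ} (Sig : Fin n → Matrix (Fin d) (Fin d) ℝ)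
    (lam : Fin n → ℝ) (S : Matrix (Fin d) (Fin d) ℝ) : ℝ :=
  ∑ k, lam k * W2sq S (Sig k)

/-- Geometric mean `GM(S⁻¹, Σ) = S^{-1/2} (S^{1/2} Σ S^{1/2})^{1/2} S^{-1/2}`. -/
noncomputable def GMinv {d : ℕ} (S Sigma : Matrix (Fin d) (Fin d) ℝ) :
    Matrix (Fin d) (Fin d) ℝ :=
  (msqrt S)⁻¹ * msqrt (msqrt S * Sigma * msqrt S) * (msqrt S)⁻¹

/-- The Spectral Dominance of Positive Weights condition. -/
def SDPW {d n : ℕ} (Sig : Fin n → Matrix (Fin d) (Fin d) ℝ) (lam : Fin n → ℝ) : Prop :=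
  ∑ j ∈ Finset.univ.filter (fun k => lam k < 0), (-lam j) * Real.sqrt (lmax (Sig j))
    < ∑ i ∈ Finset.univ.filter (fun k => 0 < lam k), lam i * Real.sqrt (lmin (Sig i))

/-!
Expanding `W₂²` and using `∑ λₖ = 1` leaves `−2 ∑ λₖ Tr((S^{1/2} Σₖ S^{1/2})^{1/2})`, so it
suffices to bound each such trace from above when `λₖ > 0` and from below when `λₖ < 0`.
In the Loewner order `λ_min(Σ) S ≤ S^{1/2} Σ S^{1/2} ≤ λ_max(Σ) S`; the square root is operator
monotone, so `√λ_min(Σ) S^{1/2} ≤ (S^{1/2} Σ S^{1/2})^{1/2} ≤ √λ_max(Σ) S^{1/2}`, and the trace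
is monotone. Since `msqrt` is Mathlib's `CFC.sqrt`, its continuous functional calculus applies.
-/

open scoped MatrixOrder

lemma msqrt_eq_cfcSqrt {d : ℕ} (A : Matrix (Fin d) (Fin d) ℝ) : msqrt A = CFC.sqrt A := by
  by_cases hA : A.PosSemidef
  · rw [msqrt, dif_pos hA, CFC.sqrt_eq_real_sqrt A hA.nonneg, cfcₙ_eq_cfc, hA.1.cfc_eq]
    rfl
  · rw [msqrt, dif_neg hA, CFC.sqrt_of_not_nonneg (by rwa [Matrix.nonneg_iff_posSemidef])]

namespace Matrix

lemma trace_le_trace_of_le {n : Type*} [Fintype n] {A B : Matrix n n ℝ} (h : A ≤ B) :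
    A.trace ≤ B.trace :=
  (tracePositiveLinearMap n ℝ ℝ).monotone h

variable {n : Type*} [Fintype n] [DecidableEq n]

lemma IsHermitian.smul_one_le {A : Matrix n n ℝ} (hA : A.IsHermitian) {c : ℝ}
    (h : ∀ i, c ≤ hA.eigenvalues i) : c • 1 ≤ A := by
  rw [← Algebra.algebraMap_eq_smul_one]
  refine algebraMap_le_of_le_spectrum ?_ hA.isSelfAdjoint
  rw [hA.spectrum_real_eq_range_eigenvalues]
  rintro _ ⟨i, rfl⟩
  exact h i

lemma IsHermitian.le_smul_one {A : Matrix n n ℝ} (hA : A.IsHermitian) {c : ℝ}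
    (h : ∀ i, hA.eigenvalues i ≤ c) : A ≤ c • 1 := by
  rw [← Algebra.algebraMap_eq_smul_one]
  refine le_algebraMap_of_spectrum_le ?_ hA.isSelfAdjoint
  rw [hA.spectrum_real_eq_range_eigenvalues]
  rintro _ ⟨i, rfl⟩
  exact h i

lemma sqrt_smul {A : Matrix n n ℝ} (hA : 0 ≤ A) {c : ℝ} (hc : 0 ≤ c) :
    CFC.sqrt (c • A) = √c • CFC.sqrt A := by
  refine CFC.sqrt_unique (a := c • A) (b := √c • CFC.sqrt A) ?_ ?_
  · rw [smul_mul_smul, CFC.sqrt_mul_sqrt_self A, Real.mul_self_sqrt hc]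
  · exact nonneg_iff_posSemidef.mpr
      ((nonneg_iff_posSemidef.mp (CFC.sqrt_nonneg A)).smul (Real.sqrt_nonneg c))

/-- The identity `Q * Q - P * P = Q * (Q - P) + (Q - P) * P` turns `⟪x, (Q * Q - P * P) x⟫` into
`μ (⟪x, Q x⟫ + ⟪x, P x⟫)` for an eigenvector `x` of `Q - P`. -/
lemma PosSemidef.eigenvalue_sub_nonneg_of_mul_self_le {P Q : Matrix n n ℝ}
    (hP : P.PosSemidef) (hQ : Q.PosSemidef) (hPQ : P * P ≤ Q * Q) {μ : ℝ} {x : n → ℝ}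
    (hx : x ≠ 0) (hμ : (Q - P) *ᵥ x = μ • x) : 0 ≤ μ := by
  have hμ' : x ᵥ* (Q - P) = μ • x := by
    rw [← mulVec_transpose, ← conjTranspose_eq_transpose_of_trivial, (hQ.1.sub hP.1).eq, hμ]
  have hquad : x ⬝ᵥ ((Q * Q - P * P) *ᵥ x) = μ * (x ⬝ᵥ (Q *ᵥ x) + x ⬝ᵥ (P *ᵥ x)) := by
    have : Q * Q - P * P = Q * (Q - P) + (Q - P) * P := by noncomm_ring
    rw [this, add_mulVec, dotProduct_add, ← mulVec_mulVec, hμ, ← mulVec_mulVec,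
      dotProduct_mulVec _ (Q - P), hμ']
    simp only [mulVec_smul, dotProduct_smul, smul_dotProduct, smul_eq_mul]
    ring
  have hPQx : 0 ≤ x ⬝ᵥ ((Q * Q - P * P) *ᵥ x) := by
    simpa using (le_iff.mp hPQ).dotProduct_mulVec_nonneg x
  have hQx : 0 ≤ x ⬝ᵥ (Q *ᵥ x) := by simpa using hQ.dotProduct_mulVec_nonneg x
  have hPx : 0 ≤ x ⬝ᵥ (P *ᵥ x) := by simpa using hP.dotProduct_mulVec_nonneg x
  by_contra! hneg
  have hQ0 : Q *ᵥ x = 0 := (hQ.dotProduct_mulVec_zero_iff x).mp (by rw [star_trivial]; nlinarith)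
  have hP0 : P *ᵥ x = 0 := (hP.dotProduct_mulVec_zero_iff x).mp (by rw [star_trivial]; nlinarith)
  rw [sub_mulVec, hQ0, hP0, sub_zero, eq_comm, smul_eq_zero] at hμ
  exact hμ.elim hneg.ne hx

/-- `CFC.monotone_sqrt` needs a C⋆-algebra, which real matrices are not. -/
lemma monotone_sqrt : Monotone (CFC.sqrt : Matrix n n ℝ → Matrix n n ℝ) := by
  intro A B hAB
  by_cases hA : 0 ≤ A
  swap
  · rw [CFC.sqrt_of_not_nonneg hA]
    exact CFC.sqrt_nonneg B
  have hP := nonneg_iff_posSemidef.mp (CFC.sqrt_nonneg A)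
  have hQ := nonneg_iff_posSemidef.mp (CFC.sqrt_nonneg B)
  have hT : (CFC.sqrt B - CFC.sqrt A).IsHermitian := hQ.1.sub hP.1
  rw [le_iff, hT.posSemidef_iff_eigenvalues_nonneg]
  intro i
  refine hP.eigenvalue_sub_nonneg_of_mul_self_le hQ ?_
    (by simpa using hT.eigenvectorBasis.orthonormal.ne_zero i) (hT.mulVec_eigenvectorBasis i)
  rwa [CFC.sqrt_mul_sqrt_self A, CFC.sqrt_mul_sqrt_self B (hA.trans hAB)]

lemma trace_sqrt_conj_le {R P : Matrix n n ℝ} (hR : 0 ≤ R) {c : ℝ} (hc : 0 ≤ c)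
    (hP : P ≤ c • 1) : (CFC.sqrt (R * P * R)).trace ≤ √c * R.trace := by
  have hconj : R * P * R ≤ c • (R * R) := by
    simpa using conjugate_le_conjugate_of_nonneg hP hR
  have hsqrt := monotone_sqrt hconj
  rw [sqrt_smul (IsSelfAdjoint.of_nonneg hR).mul_self_nonneg hc, CFC.sqrt_mul_self R] at hsqrt
  simpa using trace_le_trace_of_le hsqrt

lemma le_trace_sqrt_conj {R P : Matrix n n ℝ} (hR : 0 ≤ R) {c : ℝ} (hc : 0 ≤ c)
    (hP : c • 1 ≤ P) : √c * R.trace ≤ (CFC.sqrt (R * P * R)).trace := by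
  have hconj : c • (R * R) ≤ R * P * R := by
    simpa using conjugate_le_conjugate_of_nonneg hP hR
  have hsqrt := monotone_sqrt hconj
  rw [sqrt_smul (IsSelfAdjoint.of_nonneg hR).mul_self_nonneg hc, CFC.sqrt_mul_self R] at hsqrt
  simpa using trace_le_trace_of_le hsqrt

end Matrix

section
variable {d : ℕ}

lemma le_lmax_smul_one {P : Matrix (Fin d) (Fin d) ℝ} (hP : P.IsHermitian) : P ≤ lmax P • 1 :=
  hP.le_smul_one fun i => by
    rw [lmax, dif_pos hP]
    exact le_ciSup (Set.finite_range _).bddAbove i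

lemma lmin_smul_one_le {P : Matrix (Fin d) (Fin d) ℝ} (hP : P.IsHermitian) : lmin P • 1 ≤ P :=
  hP.smul_one_le fun i => by
    rw [lmin, dif_pos hP]
    exact ciInf_le (Set.finite_range _).bddBelow i

lemma lmax_nonneg {P : Matrix (Fin d) (Fin d) ℝ} (hP : P.PosSemidef) : 0 ≤ lmax P := by
  rw [lmax, dif_pos hP.1]
  exact Real.iSup_nonneg hP.eigenvalues_nonneg

lemma lmin_nonneg {P : Matrix (Fin d) (Fin d) ℝ} (hP : P.PosSemidef) : 0 ≤ lmin P := by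
  rw [lmin, dif_pos hP.1]
  exact Real.iInf_nonneg hP.eigenvalues_nonneg

lemma trace_msqrt_conj_le (S : Matrix (Fin d) (Fin d) ℝ) {P : Matrix (Fin d) (Fin d) ℝ}
    (hP : P.PosSemidef) :
    (msqrt (msqrt S * P * msqrt S)).trace ≤ √(lmax P) * (msqrt S).trace := by
  simp only [msqrt_eq_cfcSqrt]
  exact Matrix.trace_sqrt_conj_le (CFC.sqrt_nonneg S) (lmax_nonneg hP) (le_lmax_smul_one hP.1)

lemma le_trace_msqrt_conj (S : Matrix (Fin d) (Fin d) ℝ) {P : Matrix (Fin d) (Fin d) ℝ}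
    (hP : P.PosSemidef) :
    √(lmin P) * (msqrt S).trace ≤ (msqrt (msqrt S * P * msqrt S)).trace := by
  simp only [msqrt_eq_cfcSqrt]
  exact Matrix.le_trace_sqrt_conj (CFC.sqrt_nonneg S) (lmin_nonneg hP) (lmin_smul_one_le hP.1)

lemma Fobj_eq_of_sum_eq_one {n : ℕ} {Sig : Fin n → Matrix (Fin d) (Fin d) ℝ} {lam : Fin n → ℝ}
    (hsum : ∑ k, lam k = 1) (S : Matrix (Fin d) (Fin d) ℝ) :
    Fobj Sig lam S = S.trace + ∑ k, lam k * (Sig k).trace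
      - 2 * ∑ k, lam k * (msqrt (msqrt S * Sig k * msqrt S)).trace := by
  simp only [Fobj, W2sq, mul_sub, mul_add, Finset.sum_sub_distrib, Finset.sum_add_distrib,
    ← Finset.sum_mul, hsum, one_mul, Finset.mul_sum, mul_left_comm]

end

lemma Finset.sum_mul_le_of_mem_Icc {ι : Type*} (s : Finset ι) (w t lo hi : ι → ℝ)
    (ht : ∀ i ∈ s, t i ∈ Set.Icc (lo i) (hi i)) :
    ∑ i ∈ s, w i * t i ≤ ∑ i ∈ s with 0 < w i, w i * hi i + ∑ i ∈ s with w i < 0, w i * lo i := by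
  rw [Finset.sum_filter, Finset.sum_filter, ← Finset.sum_add_distrib]
  refine Finset.sum_le_sum fun i hi => ?_
  obtain ⟨hlo, hhi⟩ := ht i hi
  rcases lt_trichotomy (w i) 0 with hw | hw | hw
  · simpa [hw, hw.not_gt] using mul_le_mul_of_nonpos_left hlo hw.le
  · simp [hw]
  · simpa [hw, hw.not_gt] using mul_le_mul_of_nonneg_left hhi hw.le

theorem stmt3_general {d n : ℕ} (Sig : Fin n → Matrix (Fin d) (Fin d) ℝ)
    (lam : Fin n → ℝ) (hSig : ∀ k, (Sig k).PosDef) (hsum : ∑ k, lam k = 1)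
    (S : Matrix (Fin d) (Fin d) ℝ) :
    Fobj Sig lam S ≥ S.trace
      - 2 * ((∑ i ∈ Finset.univ.filter (fun k => 0 < lam k), lam i * Real.sqrt (lmax (Sig i)))
          - ∑ j ∈ Finset.univ.filter (fun k => lam k < 0), (-lam j) * Real.sqrt (lmin (Sig j)))
        * (msqrt S).trace
      + ∑ k, lam k * (Sig k).trace := by
  have hbound := Finset.sum_mul_le_of_mem_Icc Finset.univ lam
    (fun k => (msqrt (msqrt S * Sig k * msqrt S)).trace)
    (fun k => √(lmin (Sig k)) * (msqrt S).trace) (fun k => √(lmax (Sig k)) * (msqrt S).trace)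
    fun k _ => ⟨le_trace_msqrt_conj S (hSig k).posSemidef,
      trace_msqrt_conj_le S (hSig k).posSemidef⟩
  rw [ge_iff_le, Fobj_eq_of_sum_eq_one hsum]
  simp only [sub_mul, Finset.sum_mul, neg_mul, Finset.sum_neg_distrib, mul_assoc] at hbound ⊢
  linarith

/-- coercivity lower bound
`F(S) ≥ Tr S − 2 (A_max − B_min) Tr(S^(1/2)) + ∑ λₖ Tr Σₖ`. -/
theorem stmt3 {d n : ℕ} (Sig : Fin n → Matrix (Fin d) (Fin d) ℝ)
    (lam : Fin n → ℝ) (hSig : ∀ k, (Sig k).PosDef) (hsum : ∑ k, lam k = 1)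
    (S : Matrix (Fin d) (Fin d) ℝ) (hS : S.PosSemidef) :
    Fobj Sig lam S ≥ S.trace
      - 2 * ((∑ i ∈ Finset.univ.filter (fun k => 0 < lam k), lam i * Real.sqrt (lmax (Sig i)))
          - ∑ j ∈ Finset.univ.filter (fun k => lam k < 0), (-lam j) * Real.sqrt (lmin (Sig j)))
        * (msqrt S).trace
      + ∑ k, lam k * (Sig k).trace :=
  stmt3_general Sig lam hSig hsum S
end

section
/- Let d ≥ 1, let Σ₁, …, Σ_n be symmetric positive definite d×d real matrices and λ₁, …, λ_n real weights with Σ_{k=1}^n λ_k = 1, and suppose a symmetric positive definite matrix S* satisfies the stationarity equation S* = Σ_{k=1}^n λ_k (S*^{1/2} Σ_k S*^{1/2})^{1/2}. Then S* is not a local maximum of F on the set of symmetric positive definite matrices: for every ε > 0 there exists a symmetric positive definite matrix S with ‖S − S*‖ < ε and F(S) > F(S*). -/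
open Matrix BigOperators Finset
open scoped Classical

/-! Scaling a matrix by `t > 0` scales its square root by `√t`, so `W₂²(t S, Σ)` is affine in
`t` and `√t`. Summing with weights of total mass one and using the trace of the stationarity
equation, `F(t S*) = F(S*) + tr S* · (√t - 1)²`: moving `S*` slightly along its own ray strictly
increases `F`. -/

open scoped MatrixOrder

lemma msqrt_eq_cfc {d : ℕ} {M : Matrix (Fin d) (Fin d) ℝ} (hM : M.PosSemidef) :
    msqrt M = cfc Real.sqrt M := by
  rw [hM.1.cfc_eq, IsHermitian.cfc, msqrt, dif_pos hM]
  simp only [RCLike.ofReal_real_eq_id, CompTriple.comp_eq, Unitary.conjStarAlgAut_apply]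
  rfl

lemma msqrt_smul {d : ℕ} (M : Matrix (Fin d) (Fin d) ℝ) {c : ℝ} (hc : 0 < c) :
    msqrt (c • M) = √c • msqrt M := by
  by_cases hM : M.PosSemidef
  · rw [msqrt_eq_cfc (hM.smul hc.le), msqrt_eq_cfc hM, ← cfc_comp_smul c Real.sqrt M,
      ← cfc_smul (√c) Real.sqrt M]
    simp only [smul_eq_mul, Real.sqrt_mul hc.le]
  · have hcM : ¬ (c • M).PosSemidef := fun h => hM <| by
      simpa [smul_smul, hc.ne'] using h.smul (inv_nonneg.2 hc.le)
    simp [msqrt, hM, hcM]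

lemma W2sq_smul_left {d : ℕ} (S Sigma : Matrix (Fin d) (Fin d) ℝ) {t : ℝ} (ht : 0 < t) :
    W2sq (t • S) Sigma =
      t * S.trace + Sigma.trace - 2 * (√t * (msqrt (msqrt S * Sigma * msqrt S)).trace) := by
  have hinner : msqrt (t • S) * Sigma * msqrt (t • S) = t • (msqrt S * Sigma * msqrt S) := by
    rw [msqrt_smul S ht, smul_mul_assoc, mul_smul_comm, smul_mul_assoc, smul_smul,
      Real.mul_self_sqrt ht.le]
  rw [W2sq, hinner, msqrt_smul _ ht, trace_smul, trace_smul, smul_eq_mul, smul_eq_mul]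

lemma Fobj_smul_of_stationary {d n : ℕ} {Sig : Fin n → Matrix (Fin d) (Fin d) ℝ}
    {lam : Fin n → ℝ} (hsum : ∑ k, lam k = 1) {S : Matrix (Fin d) (Fin d) ℝ}
    (hstat : S = ∑ k, lam k • msqrt (msqrt S * Sig k * msqrt S)) {t : ℝ} (ht : 0 < t) :
    Fobj Sig lam (t • S) = Fobj Sig lam S + S.trace * (√t - 1) ^ 2 := by
  have htrace : S.trace = ∑ k, lam k * (msqrt (msqrt S * Sig k * msqrt S)).trace := by
    conv_lhs => rw [hstat]
    simp only [trace_sum, trace_smul, smul_eq_mul]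
  have hdiff : Fobj Sig lam (t • S) - Fobj Sig lam S =
      (t - 1) * S.trace * ∑ k, lam k -
        2 * (√t - 1) * ∑ k, lam k * (msqrt (msqrt S * Sig k * msqrt S)).trace := by
    simp only [Fobj, W2sq_smul_left _ _ ht]
    simp only [W2sq, ← Finset.sum_sub_distrib, Finset.mul_sum]
    exact Finset.sum_congr rfl fun k _ => by ring
  rw [hsum, ← htrace] at hdiff
  linear_combination hdiff - S.trace * Real.sq_sqrt ht.le

lemma sqrt_sum_sq_smul_sub_self {m p : Type*} [Fintype m] [Fintype p] (A : Matrix m p ℝ)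
    (t : ℝ) : √(∑ i, ∑ j, ((t • A) i j - A i j) ^ 2) = |t - 1| * √(∑ i, ∑ j, A i j ^ 2) := by
  have hentry : ∀ i j, ((t • A) i j - A i j) ^ 2 = (t - 1) ^ 2 * A i j ^ 2 := fun i j => by
    simp only [Matrix.smul_apply, smul_eq_mul]
    ring
  simp_rw [hentry, ← Finset.mul_sum]
  rw [Real.sqrt_mul (sq_nonneg _), Real.sqrt_sq_eq_abs]

theorem stmt8_general {d n : ℕ} (hd : 1 ≤ d) (Sig : Fin n → Matrix (Fin d) (Fin d) ℝ)
    (lam : Fin n → ℝ) (hsum : ∑ k, lam k = 1)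
    (Sstar : Matrix (Fin d) (Fin d) ℝ) (hSstar : Sstar.PosDef)
    (hstat : Sstar = ∑ k, lam k • msqrt (msqrt Sstar * Sig k * msqrt Sstar)) :
    ∀ ε : ℝ, 0 < ε → ∃ S : Matrix (Fin d) (Fin d) ℝ, S.PosDef ∧
      Real.sqrt (∑ i, ∑ j, (S i j - Sstar i j) ^ 2) < ε ∧
      Fobj Sig lam Sstar < Fobj Sig lam S := by
  intro ε hε
  set N := √(∑ i, ∑ j, Sstar i j ^ 2)
  have hN : 0 ≤ N := Real.sqrt_nonneg _
  have hstep : 0 < ε / (N + 1) := div_pos hε (by linarith)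
  set t := 1 + ε / (N + 1)
  have ht : 1 < t := by linarith
  have : Nonempty (Fin d) := ⟨⟨0, hd⟩⟩
  refine ⟨t • Sstar, hSstar.smul (by linarith), ?_, ?_⟩
  · rw [sqrt_sum_sq_smul_sub_self, abs_of_pos (by linarith), add_sub_cancel_left,
      div_mul_eq_mul_div, div_lt_iff₀ (by linarith)]
    nlinarith
  · rw [Fobj_smul_of_stationary hsum hstat (by linarith)]
    have hsqrt : 1 < √t := Real.lt_sqrt zero_le_one |>.2 (by simpa using ht)
    have := mul_pos hSstar.trace_pos (pow_pos (sub_pos.2 hsqrt) 2)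
    linarith

/-- a stationary point of `F` is never a local maximum: arbitrarily close
(in Frobenius norm) to `S*` there are positive definite matrices with strictly larger
objective value. -/
theorem stmt8 {d n : ℕ} (hd : 1 ≤ d) (Sig : Fin n → Matrix (Fin d) (Fin d) ℝ)
    (lam : Fin n → ℝ) (hSig : ∀ k, (Sig k).PosDef) (hsum : ∑ k, lam k = 1)
    (Sstar : Matrix (Fin d) (Fin d) ℝ) (hSstar : Sstar.PosDef)
    (hstat : Sstar = ∑ k, lam k • msqrt (msqrt Sstar * Sig k * msqrt Sstar)) :
    ∀ ε : ℝ, 0 < ε → ∃ S : Matrix (Fin d) (Fin d) ℝ, S.PosDef ∧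
      Real.sqrt (∑ i, ∑ j, (S i j - Sstar i j) ^ 2) < ε ∧
      Fobj Sig lam Sstar < Fobj Sig lam S :=
  stmt8_general hd Sig lam hsum Sstar hSstar hstat
end
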